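/- Define the inner product of endomorphisms F, G of the quasi-shuffle algebra by ⟨F,G⟩ = Σ_{u,v} E(F(u) ∗ G(v)) (u,v), where (u,v) are entries of a fixed symmetric coefficient matrix V. Then the reversal map |S| is self-adjoint: ⟨|S| ∘ X, Y⟩ = ⟨X, |S| ∘ Y⟩ for all endomorphisms X, Y, and the inner product is |S|-invariant: ⟨X, Y⟩ = ⟨|S| ∘ X, |S| ∘ Y⟩. -/
import Mathlib


open Finsupp

/-- Quasi-shuffle product of words over an alphabet `A`, with bracket `br : RA ⊗ RA → RA`
given on letters. -/
noncomputable def qsh {A : Type*} (br : A → A → (A →₀ ℝ)) : List A → List A → (List A →₀ ℝ)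
  | [], v => Finsupp.single v 1
  | a :: u, [] => Finsupp.single (a :: u) 1
  | a :: u, b :: v =>
      Finsupp.mapDomain (a :: ·) (qsh br u (b :: v))
    + Finsupp.mapDomain (b :: ·) (qsh br (a :: u) v)
    + (br a b).sum fun c r => r • Finsupp.mapDomain (c :: ·) (qsh br u v)
  termination_by u v => u.length + v.length

/-- Bilinear extension of the quasi-shuffle product to `R⟨A⟩`. -/
noncomputable def qshP {A : Type*} (br : A → A → (A →₀ ℝ)) (x y : List A →₀ ℝ) :
    List A →₀ ℝ :=
  x.sum fun u r => y.sum fun v s => (r * s) • qsh br u v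

/-- The identity endomorphism (recorded by its action on basis words). -/
noncomputable def idE {A : Type*} : List A → (List A →₀ ℝ) := fun w => Finsupp.single w 1

/-- The unit `ν`: projection onto the empty word. -/
noncomputable def nuE {A : Type*} : List A → (List A →₀ ℝ) := fun w =>
  match w with
  | [] => Finsupp.single ([] : List A) 1
  | _ :: _ => 0

/-- The augmented ideal projector `J = id - ν`. -/
noncomputable def JE {A : Type*} : List A → (List A →₀ ℝ) := fun w =>
  match w with
  | [] => 0
  | _ :: _ => Finsupp.single w 1

/-- Convolution product of endomorphisms: `(F ⋆ G)(w) = Σ_{uv = w} F(u) ∗ G(v)`. -/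
noncomputable def conv {A : Type*} (br : A → A → (A →₀ ℝ))
    (F G : List A → (List A →₀ ℝ)) : List A → (List A →₀ ℝ) :=
  fun w => ∑ k ∈ Finset.range (w.length + 1), qshP br (F (w.take k)) (G (w.drop k))

/-- Convolution powers, with `F^{⋆0} = ν`. -/
noncomputable def convPow {A : Type*} (br : A → A → (A →₀ ℝ))
    (F : List A → (List A →₀ ℝ)) : ℕ → List A → (List A →₀ ℝ)
  | 0 => nuE
  | k + 1 => conv br F (convPow br F k)

/-- The reversal map `|S|` extended linearly to `R⟨A⟩`. -/
noncomputable def revL {A : Type*} : (List A →₀ ℝ) → (List A →₀ ℝ) :=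
  Finsupp.mapDomain List.reverse

/-- The sign reversal map `S : a₁⋯aₙ ↦ (-1)ⁿ aₙ⋯a₁`. -/
noncomputable def SE {A : Type*} : List A → (List A →₀ ℝ) := fun w =>
  ((-1 : ℝ) ^ w.length) • Finsupp.single w.reverse 1

/-- Expectation map on words: `t^{|w|}/|w|!` on words from `{z}*`, zero otherwise. -/
noncomputable def Eword {A : Type*} [DecidableEq A] (z : A) (t : ℝ) (w : List A) : ℝ :=
  if ∀ a ∈ w, a = z then t ^ w.length / (Nat.factorial w.length) else 0

/-- Linear extension of the expectation map to `R⟨A⟩`. -/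
noncomputable def Eext {A : Type*} [DecidableEq A] (z : A) (t : ℝ) (x : List A →₀ ℝ) : ℝ :=
  x.sum fun w r => r * Eword z t w

/-- Endomorphism inner product `⟨F,G⟩ = Σ_{u,v} E(F(u) ∗ G(v)) (u,v)`, restricted to a
finite set `W` of words, with coefficient matrix `V`. -/
noncomputable def innerE {A : Type*} [DecidableEq A] (br : A → A → (A →₀ ℝ)) (z : A) (t : ℝ)
    (V : List A → List A → ℝ) (W : Finset (List A))
    (F G : List A → (List A →₀ ℝ)) : ℝ :=
  ∑ u ∈ W, ∑ v ∈ W, Eext z t (qshP br (F u) (G v)) * V u v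

/-- Projection of an element of `R⟨A⟩` onto words satisfying `p`. -/
noncomputable def projP {A : Type*} (p : List A → Prop) (x : List A →₀ ℝ) : List A →₀ ℝ :=
  haveI := Classical.decPred p
  Finsupp.filter p x

/-- Composition of the grade-`n` (word-length) projection with an endomorphism. -/
noncomputable def projLen {A : Type*} (n : ℕ) (F : List A → (List A →₀ ℝ)) :
    List A → (List A →₀ ℝ) :=
  fun w => projP (fun u => u.length = n) (F w)

/-- Extension of the bracket to a bilinear product on `RA`. -/
noncomputable def brExt {A : Type*} (br : A → A → (A →₀ ℝ)) (x y : A →₀ ℝ) : A →₀ ℝ :=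
  x.sum fun a r => y.sum fun b s => (r * s) • br a b

/-- The endomorphism `½(id - S)` (antisymmetric sign reverse). -/
noncomputable def halfMinus {A : Type*} : List A → (List A →₀ ℝ) :=
  fun w => (2⁻¹ : ℝ) • (idE w - SE w)

/-- The endomorphism `½(id + S)` (symmetric sign reverse). -/
noncomputable def halfPlus {A : Type*} : List A → (List A →₀ ℝ) :=
  fun w => (2⁻¹ : ℝ) • (idE w + SE w)



section AuxReversal

open Finsupp

lemma mapDomain_fsum {α β γ : Type*} (f : α → β) (s : γ →₀ ℝ) (v : γ → ℝ → (α →₀ ℝ)) :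
    Finsupp.mapDomain f (s.sum v) = s.sum fun a b => Finsupp.mapDomain f (v a b) :=
  map_finsuppSum (Finsupp.mapDomain.addMonoidHom f) s v

variable {A : Type*} (br : A → A → (A →₀ ℝ))

lemma qsh_nil_left (v : List A) : qsh br [] v = Finsupp.single v 1 := by
  cases v <;> rw [qsh]

lemma qsh_nil_right (u : List A) : qsh br u [] = Finsupp.single u 1 := by
  cases u <;> rw [qsh]

lemma qsh_cons (a b : A) (u v : List A) :
    qsh br (a :: u) (b :: v) =
      Finsupp.mapDomain (a :: ·) (qsh br u (b :: v))
    + Finsupp.mapDomain (b :: ·) (qsh br (a :: u) v)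
    + (br a b).sum fun c r => r • Finsupp.mapDomain (c :: ·) (qsh br u v) := by
  rw [qsh]

lemma qsh_snoc (a b : A) (x y : List A) :
    qsh br (x ++ [a]) (y ++ [b]) =
      Finsupp.mapDomain (· ++ [a]) (qsh br x (y ++ [b]))
    + Finsupp.mapDomain (· ++ [b]) (qsh br (x ++ [a]) y)
    + (br a b).sum fun c r => r • Finsupp.mapDomain (· ++ [c]) (qsh br x y) := by
  generalize hn : x.length + y.length = n
  induction n using Nat.strong_induction_on generalizing x y with
  | _ n IH =>
    match x, y with
    | [], [] =>
        simp only [List.nil_append, List.singleton_append, qsh_cons, qsh_nil_left, qsh_nil_right,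
          Finsupp.mapDomain_single]
        abel
    | [], q :: y' =>
        have ih := IH (0 + y'.length) (by subst hn; simp; try omega) [] y' rfl
        simp only [List.nil_append, List.cons_append] at ih ⊢
        rw [qsh_cons, ih, qsh_cons br a q [] y', qsh_nil_left, qsh_nil_left, qsh_nil_left,
          qsh_nil_left]
        simp only [Finsupp.mapDomain_add, mapDomain_fsum, Finsupp.mapDomain_smul,
          Finsupp.mapDomain_single, ← Finsupp.mapDomain_comp, Function.comp_def,
          List.cons_append, List.append_assoc, List.singleton_append, List.nil_append,
          Finsupp.smul_sum, smul_smul, smul_add]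
        abel
    | p :: x', [] =>
        have ih := IH (x'.length + 0) (by subst hn; simp; try omega) x' [] rfl
        simp only [List.nil_append, List.cons_append] at ih ⊢
        rw [qsh_cons, ih, qsh_cons br p b x' [], qsh_nil_right, qsh_nil_right, qsh_nil_right,
          qsh_nil_right]
        simp only [Finsupp.mapDomain_add, mapDomain_fsum, Finsupp.mapDomain_smul,
          Finsupp.mapDomain_single, ← Finsupp.mapDomain_comp, Function.comp_def,
          List.cons_append, List.append_assoc, List.singleton_append, List.nil_append,
          Finsupp.smul_sum, smul_smul, smul_add]
        abel
    | p :: x', q :: y' =>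
        have ih1 := IH (x'.length + (q :: y').length) (by subst hn; simp; try omega) x'
          (q :: y') rfl
        have ih2 := IH ((p :: x').length + y'.length) (by subst hn; simp; try omega)
          (p :: x') y' rfl
        have ih3 := IH (x'.length + y'.length) (by subst hn; simp; try omega) x' y' rfl
        simp only [List.cons_append] at ih1 ih2 ih3 ⊢
        rw [qsh_cons br p q (x' ++ [a]) (y' ++ [b]), ih1, ih2, ih3,
          qsh_cons br p q x' (y' ++ [b]), qsh_cons br p q (x' ++ [a]) y',
          qsh_cons br p q x' y']
        simp only [Finsupp.mapDomain_add, mapDomain_fsum, Finsupp.mapDomain_smul,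
          ← Finsupp.mapDomain_comp, Function.comp_def, List.cons_append, List.append_assoc,
          List.singleton_append, Finsupp.smul_sum, smul_smul, smul_add, Finsupp.sum_add]
        conv_rhs => rw [Finsupp.sum_comm]
        simp only [mul_comm]
        abel

lemma qsh_rev (u v : List A) :
    Finsupp.mapDomain List.reverse (qsh br u v) = qsh br u.reverse v.reverse := by
  generalize hn : u.length + v.length = n
  induction n using Nat.strong_induction_on generalizing u v with
  | _ n IH =>
    match u, v with
    | [], v => simp [qsh_nil_left, Finsupp.mapDomain_single]
    | a :: u, [] => simp [qsh_nil_right, qsh_nil_left, Finsupp.mapDomain_single]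
    | a :: u, b :: v =>
      have ih1 := IH (u.length + (b :: v).length) (by subst hn; simp; try omega) u (b :: v) rfl
      have ih2 := IH ((a :: u).length + v.length) (by subst hn; simp; try omega) (a :: u) v rfl
      have ih3 := IH (u.length + v.length) (by subst hn; simp; try omega) u v rfl
      have key : ∀ (c : A) (X : List A →₀ ℝ),
          Finsupp.mapDomain List.reverse (Finsupp.mapDomain (c :: ·) X)
            = Finsupp.mapDomain (· ++ [c]) (Finsupp.mapDomain List.reverse X) := by
        intro c X
        rw [← Finsupp.mapDomain_comp, ← Finsupp.mapDomain_comp]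
        congr 1
        funext l
        simp [Function.comp]
      rw [qsh_cons]
      simp only [Finsupp.mapDomain_add, mapDomain_fsum, Finsupp.mapDomain_smul, key,
        ih1, ih2, ih3]
      simp only [List.reverse_cons]
      rw [qsh_snoc]

lemma revL_qshP (x y : List A →₀ ℝ) :
    revL (qshP br x y) = qshP br (revL x) (revL y) := by
  unfold revL qshP
  rw [Finsupp.sum_mapDomain_index (f := List.reverse) (s := x)]
  · rw [mapDomain_fsum]
    apply Finsupp.sum_congr
    intro u _
    rw [Finsupp.sum_mapDomain_index (f := List.reverse) (s := y)]
    · rw [mapDomain_fsum]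
      apply Finsupp.sum_congr
      intro v _
      rw [Finsupp.mapDomain_smul, qsh_rev]
    · intro v; simp
    · intro v r s; simp [mul_add, add_smul]
  · intro u; simp
  · intro u r s
    rw [← Finsupp.sum_add]
    apply Finsupp.sum_congr
    intro v _
    simp [add_mul, add_smul]

lemma revL_revL (x : List A →₀ ℝ) : revL (revL x) = x := by
  unfold revL
  rw [← Finsupp.mapDomain_comp]
  simp [Function.comp_def]

lemma Eword_rev [DecidableEq A] (z : A) (t : ℝ) (w : List A) :
    Eword z t w.reverse = Eword z t w := by
  simp [Eword]

lemma Eext_revL [DecidableEq A] (z : A) (t : ℝ) (x : List A →₀ ℝ) :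
    Eext z t (revL x) = Eext z t x := by
  unfold Eext revL
  rw [Finsupp.sum_mapDomain_index]
  · exact Finsupp.sum_congr fun w _ => by rw [Eword_rev]
  · intro w; simp
  · intro w r s; simp [add_mul]

lemma Eext_qshP_revL_left [DecidableEq A] (z : A) (t : ℝ) (x y : List A →₀ ℝ) :
    Eext z t (qshP br (revL x) y) = Eext z t (qshP br x (revL y)) := by
  rw [← Eext_revL z t (qshP br (revL x) y), revL_qshP, revL_revL]

lemma Eext_qshP_revL_both [DecidableEq A] (z : A) (t : ℝ) (x y : List A →₀ ℝ) :
    Eext z t (qshP br x y) = Eext z t (qshP br (revL x) (revL y)) := by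
  rw [← revL_qshP, Eext_revL]

end AuxReversal

/-- the reversal map `|S|` is self-adjoint for the endomorphism inner product,
and the inner product is `|S|`-invariant. -/
theorem reversal_selfAdjoint {A : Type*} [DecidableEq A] (br : A → A → (A →₀ ℝ))
    (hcomm : ∀ a b : A, br a b = br b a)
    (hassoc : ∀ a b c : A, brExt br (br a b) (Finsupp.single c 1)
        = brExt br (Finsupp.single a 1) (br b c))
    (z : A) (t : ℝ) (V : List A → List A → ℝ) (hV : ∀ u v, V u v = V v u)
    (W : Finset (List A)) (X Y : List A → (List A →₀ ℝ)) :
    innerE br z t V W (fun w => revL (X w)) Y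
        = innerE br z t V W X (fun w => revL (Y w)) ∧
    innerE br z t V W X Y
        = innerE br z t V W (fun w => revL (X w)) (fun w => revL (Y w)) := by
  refine ⟨?_, ?_⟩
  · unfold innerE
    refine Finset.sum_congr rfl fun u _ => Finset.sum_congr rfl fun v _ => ?_
    rw [Eext_qshP_revL_left]
  · unfold innerE
    refine Finset.sum_congr rfl fun u _ => Finset.sum_congr rfl fun v _ => ?_
    have := Eext_qshP_revL_both br z t (X u) (Y v)
    simp only at this ⊢
    rw [this]
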